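/- arXiv:1802.08776 — 6 statements merged into one kernel-verified Lean document; each statement's English description precedes it below -/
import Mathlib

section
/- Let 0 < k < 1, R_s > 0 and x ∈ ℝ². The Apollonius disk closedBall((1−k²)⁻¹ • x, k‖x‖/(1−k²)) is contained in the hotspot disk closedBall(x, R_s) if and only if k‖x‖ ≤ (1−k)R_s. In particular, in this regime the SBS association region S(x,k) = {t : ‖t − x‖ ≤ k‖t‖} satisfies S(x,k) ∩ closedBall(x,R_s) = closedBall((1−k²)⁻¹ • x, k‖x‖/(1−k²)). -/
/-!
Expanding `‖t - x‖² ≤ k²‖t‖²` and dividing by `1 - k² > 0` completes the square, so the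
region `{t | ‖t - x‖ ≤ k‖t‖}` is the Apollonius disk with center `(1 - k²)⁻¹ • x` and radius
`k‖x‖/(1 - k²)`. Its center lies on the ray through `x` at distance `k²‖x‖/(1 - k²)` from `x`,
so the disk reaches at most `k‖x‖/(1 - k)` from `x`, and this bound is attained at its
far endpoint `(1 - k)⁻¹ • x`.
-/

open Metric

variable {E : Type*} [NormedAddCommGroup E] [InnerProductSpace ℝ E] {k : ℝ}

lemma dist_smul_self (a : ℝ) (x : E) : dist (a • x) x = |a - 1| * ‖x‖ := by
  rw [dist_eq_norm, ← Real.norm_eq_abs, ← norm_smul, sub_smul, one_smul]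

lemma one_sub_sq_mul_sub_sq_eq (hk : k ^ 2 ≠ 1) (t x : E) :
    (1 - k ^ 2) * ((k * ‖x‖ / (1 - k ^ 2)) ^ 2 - ‖t - (1 - k ^ 2)⁻¹ • x‖ ^ 2) =
      (k * ‖t‖) ^ 2 - ‖t - x‖ ^ 2 := by
  have hk' : 1 - k ^ 2 ≠ 0 := sub_ne_zero.mpr (Ne.symm hk)
  rw [norm_sub_sq_real, norm_sub_sq_real, real_inner_smul_right, norm_smul, Real.norm_eq_abs,
    abs_inv]
  field_simp
  rw [sq_abs]
  ring

theorem setOf_norm_sub_le_mul_norm_eq_closedBall (hk0 : 0 ≤ k) (hk1 : k < 1) (x : E) :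
    {t : E | ‖t - x‖ ≤ k * ‖t‖} = closedBall ((1 - k ^ 2)⁻¹ • x) (k * ‖x‖ / (1 - k ^ 2)) := by
  have hk2 : 0 < 1 - k ^ 2 := by nlinarith
  ext t
  rw [Set.mem_ofPred_eq, mem_closedBall, dist_eq_norm,
    ← pow_le_pow_iff_left₀ (norm_nonneg _) (by positivity) two_ne_zero,
    ← pow_le_pow_iff_left₀ (norm_nonneg _) (by positivity) two_ne_zero,
    ← sub_nonneg, ← sub_nonneg (a := _ ^ 2),
    ← one_sub_sq_mul_sub_sq_eq (by nlinarith) t x, mul_nonneg_iff_of_pos_left hk2]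

theorem closedBall_apollonius_subset_closedBall_iff (hk0 : 0 ≤ k) (hk1 : k < 1) (x : E)
    (R : ℝ) :
    closedBall ((1 - k ^ 2)⁻¹ • x) (k * ‖x‖ / (1 - k ^ 2)) ⊆ closedBall x R ↔
      k * ‖x‖ ≤ (1 - k) * R := by
  have hk : 0 < 1 - k := sub_pos.mpr hk1
  have hk2 : 0 < 1 - k ^ 2 := by nlinarith
  have reach : k * ‖x‖ / (1 - k) = dist ((1 - k)⁻¹ • x) x := by
    rw [dist_smul_self, abs_of_nonneg (sub_nonneg.mpr ((one_le_inv₀ hk).mpr (by linarith)))]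
    field_simp
    ring
  have far_mem : (1 - k)⁻¹ • x ∈ closedBall ((1 - k ^ 2)⁻¹ • x) (k * ‖x‖ / (1 - k ^ 2)) := by
    rw [← setOf_norm_sub_le_mul_norm_eq_closedBall hk0 hk1, Set.mem_ofPred_eq, ← dist_eq_norm,
      ← reach, norm_smul, Real.norm_eq_abs, abs_inv, abs_of_pos hk]
    field_simp
    rfl
  have radius_add_dist : k * ‖x‖ / (1 - k ^ 2) + dist ((1 - k ^ 2)⁻¹ • x) x =
      dist ((1 - k)⁻¹ • x) x := by
    rw [← reach, dist_smul_self,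
      abs_of_nonneg (sub_nonneg.mpr ((one_le_inv₀ hk2).mpr (by nlinarith)))]
    field_simp
    ring
  rw [← div_le_iff₀' hk, reach]
  exact ⟨fun h => h far_mem, fun h => closedBall_subset_closedBall' (radius_add_dist.trans_le h)⟩

theorem apollonius_subset_hotspot_iff_general
    (k R_s : ℝ) (hk0 : 0 < k) (hk1 : k < 1)
    (x : EuclideanSpace ℝ (Fin 2)) :
    (closedBall ((1 - k ^ 2)⁻¹ • x) (k * ‖x‖ / (1 - k ^ 2)) ⊆ closedBall x R_s ↔
      k * ‖x‖ ≤ (1 - k) * R_s) ∧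
    (k * ‖x‖ ≤ (1 - k) * R_s →
      {t : EuclideanSpace ℝ (Fin 2) | ‖t - x‖ ≤ k * ‖t‖} ∩ closedBall x R_s =
        closedBall ((1 - k ^ 2)⁻¹ • x) (k * ‖x‖ / (1 - k ^ 2))) := by
  have hsubset := closedBall_apollonius_subset_closedBall_iff hk0.le hk1 x R_s
  refine ⟨hsubset, fun h => ?_⟩
  rw [setOf_norm_sub_le_mul_norm_eq_closedBall hk0.le hk1]
  exact Set.inter_eq_left.mpr (hsubset.mpr h)

/-- **Proposition 1, first case (sharp threshold).** For `0 < k < 1`, `R_s > 0`, `x ∈ ℝ²`,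
the Apollonius disk `closedBall((1−k²)⁻¹ • x, k‖x‖/(1−k²))` is contained in the hotspot
disk `closedBall(x, R_s)` iff `k‖x‖ ≤ (1−k)R_s`; and in this regime the SBS association
region intersected with the hotspot equals the Apollonius disk. -/
theorem apollonius_subset_hotspot_iff
    (k R_s : ℝ) (hk0 : 0 < k) (hk1 : k < 1) (hR : 0 < R_s)
    (x : EuclideanSpace ℝ (Fin 2)) :
    (closedBall ((1 - k ^ 2)⁻¹ • x) (k * ‖x‖ / (1 - k ^ 2)) ⊆ closedBall x R_s ↔
      k * ‖x‖ ≤ (1 - k) * R_s) ∧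
    (k * ‖x‖ ≤ (1 - k) * R_s →
      {t : EuclideanSpace ℝ (Fin 2) | ‖t - x‖ ≤ k * ‖t‖} ∩ closedBall x R_s =
        closedBall ((1 - k ^ 2)⁻¹ • x) (k * ‖x‖ / (1 - k ^ 2))) :=
  apollonius_subset_hotspot_iff_general k R_s hk0 hk1 x
end

section
/- Let 0 < k < 1, R_s > 0 and x ∈ ℝ². The hotspot disk closedBall(x, R_s) is contained in the Apollonius disk closedBall((1−k²)⁻¹ • x, k‖x‖/(1−k²)) if and only if k‖x‖ ≥ (1+k)R_s. In particular, in this regime the SBS association region S(x,k) = {t : ‖t − x‖ ≤ k‖t‖} satisfies S(x,k) ∩ closedBall(x,R_s) = closedBall(x, R_s). -/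
/-!
In a real normed space, `closedBall x r ⊆ closedBall y s` exactly when `r + dist x y ≤ s`: the
point at distance `r` from `x` on the ray from `y` through `x` is the farthest point of the
small ball from `y`. The Apollonius center lies at distance `k²‖x‖/(1-k²)` from `x`, and after
clearing the factor `1 - k² = (1-k)(1+k)` the containment becomes `(1+k)R_s ≤ k‖x‖`. The second
claim is the reverse triangle inequality `‖t‖ ≥ ‖x‖ - R_s` on the hotspot.
-/

open Metric

section Seminormed

variable {E : Type*} [SeminormedAddCommGroup E]

lemma closedBall_subset_setOf_norm_sub_le_mul_norm {x : E} {k R : ℝ} (hk : 0 ≤ k)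
    (h : (1 + k) * R ≤ k * ‖x‖) : closedBall x R ⊆ {t | ‖t - x‖ ≤ k * ‖t‖} := by
  intro t ht
  rw [mem_closedBall, dist_eq_norm] at ht
  have hx : ‖x‖ ≤ ‖t‖ + ‖t - x‖ := by
    simpa [norm_sub_rev] using norm_le_norm_add_norm_sub' x t
  show ‖t - x‖ ≤ k * ‖t‖
  nlinarith

end Seminormed

section Normed

variable {E : Type*} [NormedAddCommGroup E] [NormedSpace ℝ E]

lemma dist_self_smul (c : ℝ) (x : E) : dist x (c • x) = |1 - c| * ‖x‖ := by
  rw [dist_eq_norm, ← Real.norm_eq_abs, ← norm_smul, sub_smul, one_smul]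

variable [Nontrivial E]

lemma exists_norm_eq_and_norm_add_eq (u : E) {r : ℝ} (hr : 0 ≤ r) :
    ∃ v : E, ‖v‖ = r ∧ ‖u + v‖ = ‖u‖ + r := by
  by_cases hu : u = 0
  · obtain ⟨v, hv⟩ := exists_norm_eq E hr
    exact ⟨v, hv, by simp [hu, hv]⟩
  · have hv : ‖(r / ‖u‖) • u‖ = r := by
      rw [norm_smul, Real.norm_of_nonneg (by positivity),
        div_mul_cancel₀ _ (norm_ne_zero_iff.2 hu)]
    refine ⟨(r / ‖u‖) • u, hv, ?_⟩
    rw [(SameRay.sameRay_nonneg_smul_right u (by positivity)).norm_add, hv]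

lemma closedBall_subset_closedBall_iff_add_dist_le {x y : E} {r s : ℝ} (hr : 0 ≤ r) :
    closedBall x r ⊆ closedBall y s ↔ r + dist x y ≤ s := by
  refine ⟨fun h => ?_, closedBall_subset_closedBall'⟩
  obtain ⟨v, hv, hxyv⟩ := exists_norm_eq_and_norm_add_eq (x - y) hr
  have hfar := h (show x + v ∈ closedBall x r by simp [hv])
  rw [mem_closedBall, dist_eq_norm, add_sub_right_comm, hxyv, ← dist_eq_norm] at hfar
  linarith

end Normed

/-- **Proposition 1, third case (sharp threshold).** For `0 < k < 1`, `R_s > 0`, `x ∈ ℝ²`,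
the hotspot disk `closedBall(x, R_s)` is contained in the Apollonius disk
`closedBall((1−k²)⁻¹ • x, k‖x‖/(1−k²))` iff `k‖x‖ ≥ (1+k)R_s`; and in this regime the SBS
association region intersected with the hotspot equals the whole hotspot disk. -/
theorem hotspot_subset_apollonius_iff
    (k R_s : ℝ) (hk0 : 0 < k) (hk1 : k < 1) (hR : 0 < R_s)
    (x : EuclideanSpace ℝ (Fin 2)) :
    (closedBall x R_s ⊆ closedBall ((1 - k ^ 2)⁻¹ • x) (k * ‖x‖ / (1 - k ^ 2)) ↔
      (1 + k) * R_s ≤ k * ‖x‖) ∧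
    ((1 + k) * R_s ≤ k * ‖x‖ →
      {t : EuclideanSpace ℝ (Fin 2) | ‖t - x‖ ≤ k * ‖t‖} ∩ closedBall x R_s =
        closedBall x R_s) := by
  have hk2 : 0 < 1 - k ^ 2 := by nlinarith
  have hcenter : dist x ((1 - k ^ 2)⁻¹ • x) = k ^ 2 * ‖x‖ / (1 - k ^ 2) := by
    rw [dist_self_smul, abs_of_nonpos] <;> field_simp <;> nlinarith
  refine ⟨?_, fun h => Set.inter_eq_right.2
    (closedBall_subset_setOf_norm_sub_le_mul_norm hk0.le h)⟩
  rw [closedBall_subset_closedBall_iff_add_dist_le hR.le, hcenter, add_div' _ _ _ hk2.ne',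
    div_le_div_iff_of_pos_right hk2]
  calc _ ↔ (1 - k) * ((1 + k) * R_s) ≤ (1 - k) * (k * ‖x‖) := by
          constructor <;> intro <;> linarith
    _ ↔ _ := mul_le_mul_iff_right₀ (by linarith)
end

section
/- Let 0 < k < 1, R_s > 0 and x ∈ ℝ² with 0 < k‖x‖ ≤ (1−k)R_s. If U is a random point uniformly distributed on the closed disk closedBall(x, R_s) ⊂ ℝ², then the SBS association probability satisfies P(‖U − x‖ ≤ k‖U‖) = k²‖x‖² / ((1−k²)² R_s²). -/
/-!
Squaring `‖t - x‖ ≤ k‖t‖` and completing the square shows that the association region is the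
Apollonius disk with centre `x / (1 - k²)` and radius `k‖x‖ / (1 - k²)`. The hypothesis
`k‖x‖ ≤ (1 - k)R_s` says exactly that this disk lies inside the hotspot, so the probability is the
ratio of the two areas, `(k‖x‖ / ((1 - k²) R_s))²`.
-/

open Metric MeasureTheory ProbabilityTheory

section Apollonius

variable {E : Type*} [NormedAddCommGroup E] [InnerProductSpace ℝ E]

def apolloniusDisk (k : ℝ) (x : E) : Set E :=
  closedBall ((1 - k ^ 2)⁻¹ • x) (k * ‖x‖ / (1 - k ^ 2))

theorem setOf_norm_sub_le_mul_norm_eq_apolloniusDisk {k : ℝ} (hk0 : 0 ≤ k) (hk1 : k < 1)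
    (x : E) : {t : E | ‖t - x‖ ≤ k * ‖t‖} = apolloniusDisk k x := by
  have hu : 0 < 1 - k ^ 2 := by nlinarith
  ext t
  have key : (1 - k ^ 2) * (‖t - (1 - k ^ 2)⁻¹ • x‖ ^ 2 - (k * ‖x‖ / (1 - k ^ 2)) ^ 2) =
      ‖t - x‖ ^ 2 - (k * ‖t‖) ^ 2 := by
    rw [norm_sub_sq_real, norm_sub_sq_real, inner_smul_right, norm_smul,
      Real.norm_of_nonneg (inv_pos.mpr hu).le]
    field_simp
    ring
  rw [apolloniusDisk, Set.mem_ofPred_eq, mem_closedBall, dist_eq_norm,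
    ← pow_le_pow_iff_left₀ (norm_nonneg _) (by positivity) two_ne_zero,
    ← pow_le_pow_iff_left₀ (norm_nonneg _) (by positivity) two_ne_zero,
    ← sub_nonpos, ← sub_nonpos (a := ‖t - _‖ ^ 2), ← key]
  exact smul_nonpos_iff_nonpos_of_pos_left hu

theorem apolloniusDisk_subset_closedBall {k R : ℝ} (hk0 : 0 ≤ k) (hk1 : k < 1) {x : E}
    (hx : k * ‖x‖ ≤ (1 - k) * R) : apolloniusDisk k x ⊆ closedBall x R := by
  have hu : 0 < 1 - k ^ 2 := by nlinarith
  have hdist : dist ((1 - k ^ 2)⁻¹ • x) x = k ^ 2 * ‖x‖ / (1 - k ^ 2) := by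
    have hcoef : (1 - k ^ 2)⁻¹ - 1 = k ^ 2 / (1 - k ^ 2) := by field_simp; ring
    rw [dist_eq_norm, ← one_smul ℝ x, smul_smul, ← sub_smul, mul_one, hcoef, norm_smul,
      Real.norm_of_nonneg (by positivity), one_smul]
    ring
  refine closedBall_subset_closedBall' ?_
  rw [hdist, ← add_div, div_le_iff₀ hu]
  nlinarith

end Apollonius

theorem cond_closedBall_of_closedBall_subset {E : Type*} [NormedAddCommGroup E]
    [NormedSpace ℝ E] [MeasurableSpace E] [BorelSpace E] [FiniteDimensional ℝ E] (μ : Measure E)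
    [μ.IsAddHaarMeasure] {x c : E} {r R : ℝ} (hr : 0 ≤ r) (hR : 0 < R)
    (h : closedBall c r ⊆ closedBall x R) :
    μ[closedBall c r | closedBall x R] = ENNReal.ofReal ((r / R) ^ Module.finrank ℝ E) := by
  have h0 : μ (ball 0 1) ≠ 0 := (measure_ball_pos μ _ one_pos).ne'
  have htop : μ (ball 0 1) ≠ ⊤ := measure_ball_lt_top.ne
  rw [cond_apply measurableSet_closedBall, Set.inter_eq_right.mpr h,
    Measure.addHaar_closedBall μ _ hr, Measure.addHaar_closedBall μ _ hR.le, div_pow,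
    ENNReal.ofReal_div_of_pos (by positivity), ENNReal.div_eq_inv_mul,
    ENNReal.mul_inv (Or.inr htop) (Or.inr h0)]
  calc _ = (ENNReal.ofReal (R ^ Module.finrank ℝ E))⁻¹ * ENNReal.ofReal (r ^ Module.finrank ℝ E)
        * ((μ (ball 0 1))⁻¹ * μ (ball 0 1)) := by ring
    _ = _ := by rw [ENNReal.inv_mul_cancel h0 htop, mul_one]

theorem sbs_association_probability_near_general
    (k R_s : ℝ) (hk0 : 0 < k) (hk1 : k < 1) (hR : 0 < R_s)
    (x : EuclideanSpace ℝ (Fin 2))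
    (hx : k * ‖x‖ ≤ (1 - k) * R_s) :
    ((volume (closedBall x R_s))⁻¹ • volume.restrict (closedBall x R_s))
        {t : EuclideanSpace ℝ (Fin 2) | ‖t - x‖ ≤ k * ‖t‖} =
      ENNReal.ofReal (k ^ 2 * ‖x‖ ^ 2 / ((1 - k ^ 2) ^ 2 * R_s ^ 2)) := by
  have hu : 0 < 1 - k ^ 2 := by nlinarith
  have hsub := apolloniusDisk_subset_closedBall hk0.le hk1 hx
  rw [← ProbabilityTheory.cond, setOf_norm_sub_le_mul_norm_eq_apolloniusDisk hk0.le hk1,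
    apolloniusDisk, cond_closedBall_of_closedBall_subset volume (by positivity) hR hsub,
    finrank_euclideanSpace_fin]
  congr 1
  field_simp

/-- **Lemma 1, first case.** For `0 < k < 1`, `R_s > 0` and `x ∈ ℝ²` with
`0 < k‖x‖ ≤ (1−k)R_s`, a point `U` uniformly distributed on `closedBall(x, R_s)`
associates to the SBS (`‖U − x‖ ≤ k‖U‖`) with probability `k²‖x‖²/((1−k²)²R_s²)`. -/
theorem sbs_association_probability_near
    (k R_s : ℝ) (hk0 : 0 < k) (hk1 : k < 1) (hR : 0 < R_s)
    (x : EuclideanSpace ℝ (Fin 2))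
    (hx0 : 0 < k * ‖x‖) (hx : k * ‖x‖ ≤ (1 - k) * R_s) :
    ((volume (closedBall x R_s))⁻¹ • volume.restrict (closedBall x R_s))
        {t : EuclideanSpace ℝ (Fin 2) | ‖t - x‖ ≤ k * ‖t‖} =
      ENNReal.ofReal (k ^ 2 * ‖x‖ ^ 2 / ((1 - k ^ 2) ^ 2 * R_s ^ 2)) :=
  sbs_association_probability_near_general k R_s hk0 hk1 hR x hx
end

section
/- Let 0 < k < 1, x ∈ ℝ² with x ≠ 0, let e ∈ ℝ² be a unit vector, and write c = ⟪x, e⟫/‖x‖ (the cosine of the angle between e and x). Then for every real u > 0: ‖u • e‖ ≤ k‖x + u • e‖ if and only if u ≤ ‖x‖·k·(√(1 − k²(1 − c²)) + k c)/(1 − k²). -/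
open scoped RealInnerProductSpace

/-! Squaring turns `‖u • e‖ ≤ k ‖x + u • e‖` into the quadratic inequality
`(1 - k²) u² - 2 k² ⟪x, e⟫ u - k² ‖x‖² ≤ 0`, whose leading coefficient is positive and whose
constant term is nonpositive; so for `u ≥ 0` it holds exactly up to the larger root, and that
root is the paper's `u_max` once the cosine `⟪x, e⟫ / ‖x‖` is cleared from the square root. -/

theorem quadratic_nonpos_iff_le_root {a b c u : ℝ} (ha : 0 < a) (hc : 0 ≤ c) (hu : 0 ≤ u) :
    a * u ^ 2 - 2 * b * u - c ≤ 0 ↔ u ≤ (b + √(b ^ 2 + a * c)) / a := by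
  set r := √(b ^ 2 + a * c)
  have hr : r ^ 2 = b ^ 2 + a * c := Real.sq_sqrt (by positivity)
  have hbr : |b| ≤ r := Real.abs_le_sqrt (le_add_of_nonneg_right (by positivity))
  have hcomplete : (a * u - b) ^ 2 - r ^ 2 = a * (a * u ^ 2 - 2 * b * u - c) := by
    rw [hr]; ring
  calc a * u ^ 2 - 2 * b * u - c ≤ 0
      ↔ a * (a * u ^ 2 - 2 * b * u - c) ≤ a * 0 := (mul_le_mul_iff_of_pos_left ha).symm
    _ ↔ (a * u - b) ^ 2 ≤ r ^ 2 := by rw [mul_zero, ← hcomplete, sub_nonpos]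
    _ ↔ |a * u - b| ≤ r := by rw [sq_le_sq, abs_of_nonneg ((abs_nonneg b).trans hbr)]
    _ ↔ a * u - b ≤ r :=
      abs_le.trans (and_iff_right (by linarith [le_abs_self b, mul_nonneg ha.le hu]))
    _ ↔ u ≤ (b + r) / a := by rw [le_div_iff₀ ha]; constructor <;> intro h <;> linarith

section InnerProductSpace

variable {E : Type*} [NormedAddCommGroup E] [InnerProductSpace ℝ E]

theorem norm_add_smul_sq_of_norm_eq_one {x e : E} (he : ‖e‖ = 1) (u : ℝ) :
    ‖x + u • e‖ ^ 2 = ‖x‖ ^ 2 + 2 * u * ⟪x, e⟫ + u ^ 2 := by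
  rw [norm_add_sq_real, real_inner_smul_right, norm_smul, he, mul_one, Real.norm_eq_abs, sq_abs]
  ring

theorem norm_smul_le_mul_norm_add_smul_iff {k u : ℝ} {x e : E} (hk0 : 0 ≤ k) (hk1 : k < 1)
    (he : ‖e‖ = 1) (hu : 0 ≤ u) :
    ‖u • e‖ ≤ k * ‖x + u • e‖ ↔
      u ≤ (k ^ 2 * ⟪x, e⟫ + √((k ^ 2 * ⟪x, e⟫) ^ 2 + (1 - k ^ 2) * (k * ‖x‖) ^ 2)) /
        (1 - k ^ 2) := by
  have hk2 : 0 < 1 - k ^ 2 := by nlinarith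
  rw [← quadratic_nonpos_iff_le_root hk2 (sq_nonneg _) hu, norm_smul, he, mul_one,
    Real.norm_eq_abs, abs_of_nonneg hu,
    ← pow_le_pow_iff_left₀ hu (by positivity) two_ne_zero, mul_pow,
    norm_add_smul_sq_of_norm_eq_one he]
  constructor <;> intro h <;> linarith

end InnerProductSpace

theorem mul_mul_sqrt_add_div_eq {n t k : ℝ} (hn : 0 ≤ n) (hk : 0 ≤ k) (ht : n = 0 → t = 0) :
    n * k * (√(1 - k ^ 2 * (1 - (t / n) ^ 2)) + k * (t / n)) =
      k ^ 2 * t + √((k ^ 2 * t) ^ 2 + (1 - k ^ 2) * (k * n) ^ 2) := by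
  rcases hn.eq_or_lt with rfl | hn
  · simp [ht rfl]
  have hrad : (k ^ 2 * t) ^ 2 + (1 - k ^ 2) * (k * n) ^ 2 =
      (n * k) ^ 2 * (1 - k ^ 2 * (1 - (t / n) ^ 2)) := by
    field_simp; ring
  rw [hrad, Real.sqrt_mul (sq_nonneg _), Real.sqrt_sq (by positivity)]
  field_simp
  ring

theorem sbs_association_radial_characterization_general
    (k : ℝ) (hk0 : 0 < k) (hk1 : k < 1)
    (x e : EuclideanSpace ℝ (Fin 2)) (he : ‖e‖ = 1) :
    ∀ u : ℝ, 0 < u →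
      (‖u • e‖ ≤ k * ‖x + u • e‖ ↔
        u ≤ ‖x‖ * k * (Real.sqrt (1 - k ^ 2 * (1 - (⟪x, e⟫ / ‖x‖) ^ 2)) +
            k * (⟪x, e⟫ / ‖x‖)) / (1 - k ^ 2)) := by
  intro u hu
  have hinner : ‖x‖ = 0 → ⟪x, e⟫ = 0 := fun h => by simp [norm_eq_zero.mp h]
  rw [norm_smul_le_mul_norm_add_smul_iff hk0.le hk1 he hu.le,
    mul_mul_sqrt_add_div_eq (norm_nonneg x) hk0.le hinner]

/-- **Radial characterization of the SBS association region** (proofs of Lemma 1 and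
Theorem 1). For `0 < k < 1`, `x ≠ 0`, a unit vector `e` and `c = ⟪x, e⟫/‖x‖`, a point at
offset `u > 0` in direction `e` from `x` satisfies `‖u • e‖ ≤ k‖x + u • e‖` iff
`u ≤ ‖x‖ k (√(1 − k²(1 − c²)) + k c)/(1 − k²)`. -/
theorem sbs_association_radial_characterization
    (k : ℝ) (hk0 : 0 < k) (hk1 : k < 1)
    (x e : EuclideanSpace ℝ (Fin 2)) (hx : x ≠ 0) (he : ‖e‖ = 1) :
    ∀ u : ℝ, 0 < u →
      (‖u • e‖ ≤ k * ‖x + u • e‖ ↔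
        u ≤ ‖x‖ * k * (Real.sqrt (1 - k ^ 2 * (1 - (⟪x, e⟫ / ‖x‖) ^ 2)) +
            k * (⟪x, e⟫ / ‖x‖)) / (1 - k ^ 2)) :=
  sbs_association_radial_characterization_general k hk0 hk1 x e he
end

section
/- Let 0 < k < 1, R_s > 0 and x ∈ ℝ² with x ≠ 0. If U is a random point uniformly distributed on the closed disk closedBall(x, R_s) ⊂ ℝ², then P(‖U − x‖ ≤ k‖U‖) = (1/(2π R_s²)) · ∫₀^{2π} ( min( R_s, ‖x‖·k·(√(1 − k² sin²ξ) + k cos ξ)/(1 − k²) ) )² dξ. -/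
/-!
Write `t = x + u`. By the law of cosines, `‖u‖ ≤ k‖x + u‖` is a quadratic condition on `r = ‖u‖`
whose only nonnegative root is `u_max(x, ξ)`, `ξ` being the angle between `u` and `x`. Hence the
part of `S(x,k)` inside `closedBall(x, R_s)` is star-shaped about `x` with radial function
`min(R_s, u_max)`, and polar integration about `x` gives its area as `½ ∫ min(R_s, u_max)² dθ`;
periodicity removes the shift by the angle of `x`, and the disk has area `π R_s²`.
-/

open Metric MeasureTheory Real Set

/-- The paper's `u_max(x, ξ)`, with `c = ‖x‖`. -/
noncomputable def uMax (k c ξ : ℝ) : ℝ :=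
  c * k * (√(1 - k ^ 2 * sin ξ ^ 2) + k * cos ξ) / (1 - k ^ 2)

section uMax

variable {k c : ℝ}

lemma mul_abs_cos_le_sqrt (hk : k ^ 2 ≤ 1) (ξ : ℝ) :
    k * |cos ξ| ≤ √(1 - k ^ 2 * sin ξ ^ 2) := by
  refine Real.le_sqrt_of_sq_le ?_
  nlinarith [sin_sq_add_cos_sq ξ, sq_abs (cos ξ), sq_nonneg (sin ξ)]

lemma uMax_nonneg (hk0 : 0 ≤ k) (hk1 : k < 1) (hc : 0 ≤ c) (ξ : ℝ) : 0 ≤ uMax k c ξ := by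
  have hsum : 0 ≤ √(1 - k ^ 2 * sin ξ ^ 2) + k * cos ξ := by
    nlinarith [mul_abs_cos_le_sqrt (by nlinarith : k ^ 2 ≤ 1) ξ, neg_abs_le (cos ξ)]
  have : 0 < 1 - k ^ 2 := by nlinarith
  unfold uMax
  positivity

lemma continuous_uMax : Continuous (uMax k c) := by
  unfold uMax; fun_prop

lemma uMax_periodic : Function.Periodic (uMax k c) (2 * π) := by
  intro ξ; simp only [uMax, sin_add_two_pi, cos_add_two_pi]

lemma sq_le_sq_mul_iff_le_uMax (hk0 : 0 < k) (hk1 : k < 1) (hc : 0 < c) {r : ℝ} (hr : 0 ≤ r)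
    (ξ : ℝ) : r ^ 2 ≤ k ^ 2 * (c ^ 2 + 2 * c * r * cos ξ + r ^ 2) ↔ r ≤ uMax k c ξ := by
  set s := √(1 - k ^ 2 * sin ξ ^ 2) with hs_def
  have h1 : 0 < 1 - k ^ 2 := by nlinarith
  have hs : s ^ 2 = 1 - k ^ 2 * sin ξ ^ 2 := Real.sq_sqrt (by nlinarith [sin_sq_le_one ξ])
  have hks : k * cos ξ < s := by
    have : k * |cos ξ| < s := by
      refine lt_of_le_of_ne (mul_abs_cos_le_sqrt (by nlinarith) ξ) fun h => ?_
      nlinarith [sin_sq_add_cos_sq ξ, sq_abs (cos ξ), congrArg (· ^ 2) h]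
    linarith [mul_le_mul_of_nonneg_left (le_abs_self (cos ξ)) hk0.le]
  -- the roots of the quadratic in `r` are `uMax k c ξ` and `rm < 0`
  set rm := c * k * (k * cos ξ - s) / (1 - k ^ 2)
  have hrm : rm < 0 :=
    div_neg_of_neg_of_pos (mul_neg_of_pos_of_neg (by positivity) (by linarith)) h1
  have hfactor : k ^ 2 * (c ^ 2 + 2 * c * r * cos ξ + r ^ 2) - r ^ 2
      = (1 - k ^ 2) * (uMax k c ξ - r) * (r - rm) := by
    simp only [uMax, rm, ← hs_def]
    field_simp
    linear_combination -(c * k) ^ 2 * hs + (c * k) ^ 2 * k ^ 2 * sin_sq_add_cos_sq ξ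
  have hpos : 0 < r - rm := by linarith
  constructor
  · intro h
    by_contra! hlt
    nlinarith [mul_pos (mul_pos h1 (sub_pos.mpr hlt)) hpos]
  · intro h
    nlinarith [mul_nonneg (mul_nonneg h1.le (sub_nonneg.mpr h)) hpos.le]

end uMax

def sbsRegion {E : Type*} [SeminormedAddCommGroup E] (x : E) (k : ℝ) : Set E :=
  {t | ‖t - x‖ ≤ k * ‖t‖}

lemma isClosed_sbsRegion {E : Type*} [SeminormedAddCommGroup E] (x : E) (k : ℝ) :
    IsClosed (sbsRegion x k) :=
  isClosed_le (by fun_prop) (by fun_prop)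

lemma LinearIsometryEquiv.preimage_sbsRegion {E F : Type*} [SeminormedAddCommGroup E]
    [SeminormedAddCommGroup F] [NormedSpace ℝ E] [NormedSpace ℝ F] (e : E ≃ₗᵢ[ℝ] F) (x : F)
    (k : ℝ) : e ⁻¹' sbsRegion x k = sbsRegion (e.symm x) k := by
  ext t
  simp only [sbsRegion, mem_preimage, mem_ofPred_eq]
  rw [← e.norm_map (t - e.symm x), map_sub, e.apply_symm_apply, e.norm_map]

lemma setLIntegral_Ioi_indicator_Iic_ofReal {a : ℝ} (ha : 0 ≤ a) :
    ∫⁻ r in Ioi 0, (Iic a).indicator ENNReal.ofReal r = ENNReal.ofReal (a ^ 2 / 2) := by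
  rw [lintegral_indicator measurableSet_Iic, Measure.restrict_restrict measurableSet_Iic,
    inter_comm, Ioi_inter_Iic, ← ofReal_integral_eq_lintegral_ofReal,
    ← intervalIntegral.integral_of_le ha, integral_id]
  · norm_num
  · exact intervalIntegral.intervalIntegrable_id.1
  · filter_upwards [ae_restrict_mem measurableSet_Ioc] with r hr using hr.1.le

lemma Function.Periodic.lintegral_Ioo_ofReal_comp_sub {f : ℝ → ℝ} {T : ℝ}
    (hf : Function.Periodic f T) (hT : 0 ≤ T) (hfc : Continuous f) (hf0 : ∀ x, 0 ≤ f x)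
    (a φ : ℝ) :
    ∫⁻ θ in Ioo a (a + T), ENNReal.ofReal (f (θ - φ)) = ENNReal.ofReal (∫ ξ in 0..T, f ξ) := by
  have hshift : Continuous fun θ ↦ f (θ - φ) := by fun_prop
  rw [← ofReal_integral_eq_lintegral_ofReal
    (hshift.integrableOn_Icc.mono_set Ioo_subset_Icc_self) (ae_of_all _ fun θ ↦ hf0 _),
    ← integral_Ioc_eq_integral_Ioo, ← intervalIntegral.integral_of_le (by linarith),
    intervalIntegral.integral_comp_sub_right f φ, add_sub_right_comm,
    hf.intervalIntegral_add_eq, zero_add]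

namespace Complex

lemma norm_polarCoord_symm_add_sq (r θ : ℝ) (w : ℂ) :
    ‖Complex.polarCoord.symm (r, θ) + w‖ ^ 2 =
      ‖w‖ ^ 2 + 2 * ‖w‖ * r * Real.cos (θ - arg w) + r ^ 2 := by
  rw [← normSq_eq_norm_sq, normSq_add, normSq_eq_norm_sq, normSq_eq_norm_sq,
    norm_polarCoord_symm, sq_abs, Real.cos_sub]
  have hre : (Complex.polarCoord.symm (r, θ) * (starRingEnd ℂ) w).re =
      r * Real.cos θ * w.re + r * Real.sin θ * w.im := by
    simp [Complex.polarCoord_symm_apply, cos_ofReal_re, sin_ofReal_re]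
  rw [hre, ← norm_mul_cos_arg w, ← norm_mul_sin_arg w]
  ring

lemma polarCoord_symm_add_mem_sbsRegion_iff {k : ℝ} (hk0 : 0 < k) (hk1 : k < 1)
    {w : ℂ} (hw : w ≠ 0) {r : ℝ} (hr : 0 ≤ r) (θ : ℝ) :
    Complex.polarCoord.symm (r, θ) + w ∈ sbsRegion w k ↔ r ≤ uMax k ‖w‖ (θ - arg w) := by
  rw [sbsRegion, mem_ofPred_eq, add_sub_cancel_right, norm_polarCoord_symm, abs_of_nonneg hr,
    ← pow_le_pow_iff_left₀ hr (by positivity) two_ne_zero, mul_pow, norm_polarCoord_symm_add_sq]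
  exact sq_le_sq_mul_iff_le_uMax hk0 hk1 (norm_pos_iff.mpr hw) hr _

/-- The area of a region that is star-shaped about `0` with radial function `ρ`. -/
lemma volume_eq_lintegral_of_polarCoord_symm_mem_iff {A : Set ℂ} (hA : MeasurableSet A)
    {ρ : ℝ → ℝ} (hρ : Measurable ρ) (hρ0 : ∀ θ, 0 ≤ ρ θ)
    (hmem : ∀ p ∈ polarCoord.target, Complex.polarCoord.symm p ∈ A ↔ p.1 ≤ ρ p.2) :
    volume A = ∫⁻ θ in Ioo (-π) π, ENNReal.ofReal (ρ θ ^ 2 / 2) := by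
  set S : Set (ℝ × ℝ) := {p | p.1 ≤ ρ p.2}
  have hS : MeasurableSet S := measurableSet_le measurable_fst (hρ.comp measurable_snd)
  calc volume A = ∫⁻ z, A.indicator 1 z := (lintegral_indicator_one hA).symm
    _ = ∫⁻ p in polarCoord.target,
          ENNReal.ofReal p.1 • A.indicator 1 (Complex.polarCoord.symm p) :=
      (Complex.lintegral_comp_polarCoord_symm _).symm
    _ = ∫⁻ p in Ioi 0 ×ˢ Ioo (-π) π, S.indicator (fun p ↦ ENNReal.ofReal p.1) p := by
      refine setLIntegral_congr_fun polarCoord.open_target.measurableSet fun p hp ↦ ?_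
      by_cases h : p ∈ S
      · rw [indicator_of_mem ((hmem p hp).mpr h), indicator_of_mem h, Pi.one_apply, smul_eq_mul,
          mul_one]
      · rw [indicator_of_notMem (mt (hmem p hp).mp h), indicator_of_notMem h, smul_zero]
    _ = ∫⁻ θ in Ioo (-π) π, ∫⁻ r in Ioi 0, (Iic (ρ θ)).indicator ENNReal.ofReal r := by
      rw [Measure.volume_eq_prod, ← Measure.prod_restrict, lintegral_prod_symm]
      · rfl
      · exact ((ENNReal.measurable_ofReal.comp measurable_fst).indicator hS).aemeasurable
    _ = ∫⁻ θ in Ioo (-π) π, ENNReal.ofReal (ρ θ ^ 2 / 2) := by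
      simp_rw [setLIntegral_Ioi_indicator_Iic_ofReal (hρ0 _)]

lemma volume_sbsRegion_inter_closedBall {k R : ℝ} (hk0 : 0 < k) (hk1 : k < 1)
    (hR : 0 ≤ R) {w : ℂ} (hw : w ≠ 0) :
    volume (sbsRegion w k ∩ closedBall w R) =
      ENNReal.ofReal (∫ ξ in 0..2 * π, min R (uMax k ‖w‖ ξ) ^ 2 / 2) := by
  set ρ : ℝ → ℝ := fun ξ ↦ min R (uMax k ‖w‖ ξ)
  have hρc : Continuous ρ := continuous_const.min continuous_uMax
  have hρ0 : ∀ ξ, 0 ≤ ρ ξ := fun ξ ↦ le_min hR (uMax_nonneg hk0.le hk1 (norm_nonneg w) ξ)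
  have hρper : Function.Periodic (fun ξ ↦ ρ ξ ^ 2 / 2) (2 * π) := fun ξ ↦ by
    simp only [ρ, uMax_periodic ξ]
  rw [← measure_preimage_add_right volume w,
    volume_eq_lintegral_of_polarCoord_symm_mem_iff (ρ := fun θ ↦ ρ (θ - arg w))
      (((isClosed_sbsRegion w k).inter isClosed_closedBall).measurableSet.preimage
        (measurable_add_const w))
      (hρc.comp (continuous_sub_right _)).measurable (fun θ ↦ hρ0 _)]
  · rw [show Ioo (-π) π = Ioo (-π) (-π + 2 * π) by ring_nf]
    exact hρper.lintegral_Ioo_ofReal_comp_sub (by positivity) (by fun_prop)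
      (fun ξ ↦ by positivity) _ _
  · rintro ⟨r, θ⟩ ⟨hr, -⟩
    rw [mem_preimage, mem_inter_iff, polarCoord_symm_add_mem_sbsRegion_iff hk0 hk1 hw hr.le,
      mem_closedBall, dist_add_self_left, norm_polarCoord_symm, abs_of_pos hr, and_comm]
    exact le_min_iff.symm

end Complex

/-- **Lemma 1, integral form (equation (7)).** For `0 < k < 1`, `R_s > 0` and `x ≠ 0`, a
point `U` uniformly distributed on `closedBall(x, R_s)` associates to the SBS with
probability `(1/(2πR_s²)) ∫₀^{2π} (min(R_s, ‖x‖k(√(1 − k² sin²ξ) + k cos ξ)/(1 − k²)))² dξ`. -/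
theorem sbs_association_probability_integral_form
    (k R_s : ℝ) (hk0 : 0 < k) (hk1 : k < 1) (hR : 0 < R_s)
    (x : EuclideanSpace ℝ (Fin 2)) (hx : x ≠ 0) :
    ((volume (closedBall x R_s))⁻¹ • volume.restrict (closedBall x R_s))
        {t : EuclideanSpace ℝ (Fin 2) | ‖t - x‖ ≤ k * ‖t‖} =
      ENNReal.ofReal ((1 / (2 * π * R_s ^ 2)) *
        ∫ ξ in (0 : ℝ)..(2 * π),
          (min R_s (‖x‖ * k * (Real.sqrt (1 - k ^ 2 * Real.sin ξ ^ 2) + k * Real.cos ξ) /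
            (1 - k ^ 2))) ^ 2) := by
  set e := Complex.orthonormalBasisOneI.repr
  have hw : e.symm x ≠ 0 := by simpa using hx
  have hS : MeasurableSet (sbsRegion x k) := (isClosed_sbsRegion x k).measurableSet
  have hvol : volume (sbsRegion x k ∩ closedBall x R_s) =
      ENNReal.ofReal ((∫ ξ in 0..2 * π, min R_s (uMax k ‖x‖ ξ) ^ 2) / 2) := by
    rw [← Complex.orthonormalBasisOneI.measurePreserving_repr.measure_preimage
        (hS.inter measurableSet_closedBall).nullMeasurableSet,
      preimage_inter, e.preimage_sbsRegion, e.preimage_closedBall,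
      Complex.volume_sbsRegion_inter_closedBall hk0 hk1 hR.le hw, e.symm.norm_map,
      intervalIntegral.integral_div]
  change ((volume (closedBall x R_s))⁻¹ • volume.restrict (closedBall x R_s)) (sbsRegion x k) =
    ENNReal.ofReal (1 / (2 * π * R_s ^ 2) * ∫ ξ in 0..2 * π, min R_s (uMax k ‖x‖ ξ) ^ 2)
  rw [Measure.smul_apply, Measure.restrict_apply hS, smul_eq_mul, hvol,
    EuclideanSpace.volume_closedBall_fin_two, ← ENNReal.ofReal_pow hR.le,
    ← ENNReal.ofReal_mul (by positivity), ← ENNReal.ofReal_inv_of_pos (by positivity),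
    ← ENNReal.ofReal_mul (by positivity)]
  congr 1
  field_simp
end

section
/- Let r₁, r₂ > 0 and let c₁, c₂ ∈ ℝ² with d = ‖c₁ − c₂‖ satisfying |r₁ − r₂| < d < r₁ + r₂, d² + r₁² > r₂² and d² + r₂² > r₁². Then the Lebesgue area of the intersection of the two closed disks equals volume(closedBall(c₁, r₁) ∩ closedBall(c₂, r₂)) = r₁²·arctan(t/(d² + r₁² − r₂²)) + r₂²·arctan(t/(d² − r₁² + r₂²)) − t/2, where t = √((d + r₁ + r₂)(d + r₁ − r₂)(d − r₁ + r₂)(−d + r₁ + r₂)). -/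
/-!
Move the centres to `0` and `(d, 0)` by an isometry. Slicing the lens by vertical lines, the slice
at abscissa `x` has length `2 √(min (r₁² - x²) (r₂² - (x - d)²))`, and the minimum switches from the
second disk to the first at the common chord `x = x₀`, `2 d x₀ = d² + r₁² - r₂²`. So the lens is
the union of two circular segments, each of area `r² arccos (a / r) - a √(r² - a²)` by the
fundamental theorem of calculus; since the half-chord is `t / (2d)` and the chord's distances
`x₀, d - x₀` to the centres are positive, `arccos (a / r) = arctan (√(r² - a²) / a)` gives the
stated arctangents.
-/

open Metric MeasureTheory Real Set

theorem sqrt_one_sub_div_sq {r : ℝ} (x : ℝ) (hr : 0 < r) :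
    √(1 - (x / r) ^ 2) = √(r ^ 2 - x ^ 2) / r := by
  rw [show 1 - (x / r) ^ 2 = (r ^ 2 - x ^ 2) / r ^ 2 by field_simp, sqrt_div' _ (sq_nonneg r),
    sqrt_sq hr.le]

theorem hasDerivAt_mul_sqrt_sq_sub_sq_sub_arccos {r x : ℝ} (hr : 0 < r) (hx : |x| < r) :
    HasDerivAt (fun y => y * √(r ^ 2 - y ^ 2) - r ^ 2 * arccos (y / r))
      (2 * √(r ^ 2 - x ^ 2)) x := by
  obtain ⟨hlo, hhi⟩ := abs_lt.mp hx
  have hpos : 0 < r ^ 2 - x ^ 2 := by nlinarith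
  have hsqrt :
      HasDerivAt (fun y => √(r ^ 2 - y ^ 2)) (-(2 * x) / (2 * √(r ^ 2 - x ^ 2))) x := by
    simpa using ((hasDerivAt_pow 2 x).const_sub (r ^ 2)).sqrt hpos.ne'
  have harccos :
      HasDerivAt (fun y => arccos (y / r)) (-(1 / √(1 - (x / r) ^ 2)) * (1 / r)) x :=
    (hasDerivAt_arccos (by rw [ne_eq, div_eq_iff hr.ne']; linarith)
      (by rw [ne_eq, div_eq_iff hr.ne']; linarith)).comp x ((hasDerivAt_id x).div_const r)
  refine (((hasDerivAt_id x).mul hsqrt).sub (harccos.const_mul (r ^ 2))).congr_deriv ?_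
  rw [sqrt_one_sub_div_sq x hr, id]
  field_simp
  rw [sq_sqrt hpos.le]
  ring

theorem integral_two_mul_sqrt_sq_sub_sq {r a : ℝ} (hr : 0 < r) (ha : |a| ≤ r) :
    ∫ x in a..r, 2 * √(r ^ 2 - x ^ 2) = r ^ 2 * arccos (a / r) - a * √(r ^ 2 - a ^ 2) := by
  have hcont : Continuous fun y => y * √(r ^ 2 - y ^ 2) - r ^ 2 * arccos (y / r) := by
    fun_prop
  rw [intervalIntegral.integral_eq_sub_of_hasDerivAt_of_le (abs_le.mp ha).2 hcont.continuousOn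
    (fun x hx => hasDerivAt_mul_sqrt_sq_sub_sq_sub_arccos hr
      (abs_lt.mpr ⟨(abs_le.mp ha).1.trans_lt hx.1, hx.2⟩))
    (by apply Continuous.intervalIntegrable; fun_prop)]
  simp [div_self hr.ne']

theorem arccos_div_eq_arctan {a r : ℝ} (ha : 0 < a) (hr : 0 < r) :
    arccos (a / r) = arctan (√(r ^ 2 - a ^ 2) / a) := by
  rw [arccos_eq_arctan (div_pos ha hr), sqrt_one_sub_div_sq a hr]
  field_simp

theorem volume_setOf_sq_le (a : ℝ) : volume {y : ℝ | y ^ 2 ≤ a} = ENNReal.ofReal (2 * √a) := by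
  rcases le_or_gt 0 a with ha | ha
  · have : {y : ℝ | y ^ 2 ≤ a} = Icc (-√a) √a := by ext y; exact sq_le ha
    rw [this, Real.volume_Icc]
    ring_nf
  · have : {y : ℝ | y ^ 2 ≤ a} = ∅ := eq_empty_of_forall_notMem fun y hy => by
      nlinarith [sq_nonneg y, hy.out]
    simp [this, sqrt_eq_zero'.mpr ha.le]

theorem volume_setOf_snd_sq_le {g : ℝ → ℝ} (hg : Measurable g) :
    volume {p : ℝ × ℝ | p.2 ^ 2 ≤ g p.1} = ∫⁻ x, ENNReal.ofReal (2 * √(g x)) := by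
  rw [Measure.volume_eq_prod, Measure.prod_apply (measurableSet_le (by fun_prop) (by fun_prop))]
  simp_rw [← volume_setOf_sq_le]
  rfl

theorem lintegral_ofReal_eq_intervalIntegral {f : ℝ → ℝ} {a b : ℝ} (hf : Continuous f)
    (hf₀ : ∀ x, 0 ≤ f x) (hsupp : Function.support f ⊆ Ioc a b) :
    ∫⁻ x, ENNReal.ofReal (f x) = ENNReal.ofReal (∫ x in a..b, f x) := by
  have hint : Integrable f :=
    (integrableOn_iff_integrable_of_support_subset hsupp).mp
      (hf.integrableOn_Icc.mono_set Ioc_subset_Icc_self)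
  rw [intervalIntegral.integral_eq_integral_of_support_subset hsupp,
    ofReal_integral_eq_lintegral_ofReal hint (Filter.Eventually.of_forall hf₀)]

theorem volume_planar_lens {r₁ r₂ d x₀ : ℝ} (hr₁ : 0 < r₁) (hr₂ : 0 < r₂) (hd : 0 ≤ d)
    (hx₀ : 2 * d * x₀ = d ^ 2 + r₁ ^ 2 - r₂ ^ 2) (h₀ : |x₀| ≤ r₁) (h₁ : |d - x₀| ≤ r₂) :
    volume {p : ℝ × ℝ | p.1 ^ 2 + p.2 ^ 2 ≤ r₁ ^ 2 ∧ (p.1 - d) ^ 2 + p.2 ^ 2 ≤ r₂ ^ 2} =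
      ENNReal.ofReal (r₂ ^ 2 * arccos ((d - x₀) / r₂) - (d - x₀) * √(r₂ ^ 2 - (d - x₀) ^ 2) +
        (r₁ ^ 2 * arccos (x₀ / r₁) - x₀ * √(r₁ ^ 2 - x₀ ^ 2))) := by
  set g : ℝ → ℝ := fun x => min (r₁ ^ 2 - x ^ 2) (r₂ ^ 2 - (x - d) ^ 2)
  have hset : {p : ℝ × ℝ | p.1 ^ 2 + p.2 ^ 2 ≤ r₁ ^ 2 ∧ (p.1 - d) ^ 2 + p.2 ^ 2 ≤ r₂ ^ 2} =
      {p | p.2 ^ 2 ≤ g p.1} := by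
    ext p
    simp only [mem_ofPred_eq, g, le_min_iff]
    constructor <;> rintro ⟨h, h'⟩ <;> constructor <;> linarith
  -- `x₀` is the abscissa of the common chord: left of it the second disk is the narrower one
  have hcmp (x : ℝ) : r₂ ^ 2 - (x - d) ^ 2 - (r₁ ^ 2 - x ^ 2) = 2 * d * (x - x₀) := by
    linear_combination hx₀
  have hleft (x : ℝ) (hx : x ≤ x₀) : g x = r₂ ^ 2 - (x - d) ^ 2 :=
    min_eq_right (by nlinarith [hcmp x])
  have hright (x : ℝ) (hx : x₀ ≤ x) : g x = r₁ ^ 2 - x ^ 2 :=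
    min_eq_left (by nlinarith [hcmp x])
  have hsupp : Function.support (fun x => 2 * √(g x)) ⊆ Ioc (d - r₂) r₁ := by
    intro x hx
    by_contra hout
    refine hx ?_
    have : g x ≤ 0 := by
      rcases not_and_or.mp hout with hlo | hhi
      · exact min_le_of_right_le (by nlinarith)
      · exact min_le_of_left_le (by nlinarith)
    simp [sqrt_eq_zero'.mpr this]
  obtain ⟨hlo₀, hhi₀⟩ := abs_le.mp h₀
  obtain ⟨hlo₁, hhi₁⟩ := abs_le.mp h₁
  have hcont : Continuous fun x => 2 * √(g x) := by fun_prop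
  rw [hset, volume_setOf_snd_sq_le (by fun_prop),
    lintegral_ofReal_eq_intervalIntegral hcont (fun x => by positivity) hsupp,
    ← intervalIntegral.integral_add_adjacent_intervals (b := x₀) (hcont.intervalIntegrable _ _)
      (hcont.intervalIntegrable _ _)]
  congr 2
  · calc ∫ x in d - r₂..x₀, 2 * √(g x) = ∫ x in d - r₂..x₀, 2 * √(r₂ ^ 2 - (d - x) ^ 2) := by
          refine intervalIntegral.integral_congr fun x hx => ?_
          rw [uIcc_of_le (by linarith)] at hx
          rw [hleft x hx.2, sub_sq_comm]
      _ = ∫ x in d - x₀..r₂, 2 * √(r₂ ^ 2 - x ^ 2) := by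
          rw [intervalIntegral.integral_comp_sub_left (fun x => 2 * √(r₂ ^ 2 - x ^ 2)),
            sub_sub_cancel]
      _ = _ := integral_two_mul_sqrt_sq_sub_sq hr₂ h₁
  · calc ∫ x in x₀..r₁, 2 * √(g x) = ∫ x in x₀..r₁, 2 * √(r₁ ^ 2 - x ^ 2) := by
          refine intervalIntegral.integral_congr fun x hx => ?_
          rw [uIcc_of_le hhi₀] at hx
          rw [hright x hx.1]
      _ = _ := integral_two_mul_sqrt_sq_sub_sq hr₁ h₀

theorem volume_closedBall_inter_closedBall_eq {E : Type*} [NormedAddCommGroup E]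
    [InnerProductSpace ℝ E] [FiniteDimensional ℝ E] [MeasurableSpace E] [BorelSpace E]
    {c₁ c₂ v : E} (hv : ‖v‖ = ‖c₁ - c₂‖) (r₁ r₂ : ℝ) :
    volume (closedBall c₁ r₁ ∩ closedBall c₂ r₂) =
      volume (closedBall 0 r₁ ∩ closedBall v r₂) := by
  -- the reflection exchanging `v` and `c₂ - c₁`, then translation by `c₁`: `0 ↦ c₁`, `v ↦ c₂`
  set e := Submodule.reflection (ℝ ∙ (v - (c₂ - c₁)))ᗮ
  have hev : e v = c₂ - c₁ := Submodule.reflection_sub (by rw [hv, norm_sub_rev])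
  have hiso : Isometry fun x => e x + c₁ := (IsometryEquiv.addRight c₁).isometry.comp e.isometry
  have hmp : MeasurePreserving (fun x => e x + c₁) :=
    (measurePreserving_add_right volume c₁).comp e.measurePreserving
  rw [← hmp.measure_preimage
    (measurableSet_closedBall.inter measurableSet_closedBall).nullMeasurableSet, preimage_inter]
  congr 2
  · simpa using hiso.preimage_closedBall 0 r₁
  · simpa [hev] using hiso.preimage_closedBall v r₂

theorem EuclideanSpace.mem_closedBall_fin_two {x y : EuclideanSpace ℝ (Fin 2)} {r : ℝ}
    (hr : 0 ≤ r) :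
    x ∈ closedBall y r ↔ (x 0 - y 0) ^ 2 + (x 1 - y 1) ^ 2 ≤ r ^ 2 := by
  rw [mem_closedBall, EuclideanSpace.dist_eq, Fin.sum_univ_two, sqrt_le_left hr, Real.dist_eq,
    Real.dist_eq, sq_abs, sq_abs]

theorem EuclideanSpace.volume_preimage_fin_two {s : Set (ℝ × ℝ)} (hs : MeasurableSet s) :
    volume ((fun x : EuclideanSpace ℝ (Fin 2) => (x 0, x 1)) ⁻¹' s) = volume s :=
  ((volume_preserving_finTwoArrow ℝ).comp
    (EuclideanSpace.volume_preserving_symm_measurableEquiv_toLp (Fin 2))).measure_preimage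
    hs.nullMeasurableSet

theorem volume_closedBall_zero_inter_closedBall_single {r₁ r₂ : ℝ} (hr₁ : 0 ≤ r₁)
    (hr₂ : 0 ≤ r₂) (d : ℝ) :
    volume (closedBall (0 : EuclideanSpace ℝ (Fin 2)) r₁ ∩
        closedBall (EuclideanSpace.single 0 d) r₂) =
      volume {p : ℝ × ℝ | p.1 ^ 2 + p.2 ^ 2 ≤ r₁ ^ 2 ∧ (p.1 - d) ^ 2 + p.2 ^ 2 ≤ r₂ ^ 2} := by
  have hs : MeasurableSet
      {p : ℝ × ℝ | p.1 ^ 2 + p.2 ^ 2 ≤ r₁ ^ 2 ∧ (p.1 - d) ^ 2 + p.2 ^ 2 ≤ r₂ ^ 2} := by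
    measurability
  rw [← EuclideanSpace.volume_preimage_fin_two hs]
  congr 1
  ext x
  simp [EuclideanSpace.mem_closedBall_fin_two hr₁, EuclideanSpace.mem_closedBall_fin_two hr₂]

/-- **Circle-intersection (lens) area formula** (used in Lemma 1). For two closed disks in
`ℝ²` of radii `r₁, r₂ > 0` and center distance `d = ‖c₁ − c₂‖` with `|r₁ − r₂| < d < r₁ + r₂`,
`d² + r₁² > r₂²` and `d² + r₂² > r₁²`, the area of their intersection equals
`r₁² arctan(t/(d² + r₁² − r₂²)) + r₂² arctan(t/(d² − r₁² + r₂²)) − t/2` where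
`t = √((d+r₁+r₂)(d+r₁−r₂)(d−r₁+r₂)(−d+r₁+r₂))`. -/
theorem lens_area_of_two_disks
    (r₁ r₂ : ℝ) (hr₁ : 0 < r₁) (hr₂ : 0 < r₂)
    (c₁ c₂ : EuclideanSpace ℝ (Fin 2))
    (hlow : |r₁ - r₂| < ‖c₁ - c₂‖) (hhigh : ‖c₁ - c₂‖ < r₁ + r₂)
    (h₁ : ‖c₁ - c₂‖ ^ 2 + r₁ ^ 2 > r₂ ^ 2) (h₂ : ‖c₁ - c₂‖ ^ 2 + r₂ ^ 2 > r₁ ^ 2)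
    (t : ℝ)
    (ht : t = Real.sqrt ((‖c₁ - c₂‖ + r₁ + r₂) * (‖c₁ - c₂‖ + r₁ - r₂) *
      (‖c₁ - c₂‖ - r₁ + r₂) * (-‖c₁ - c₂‖ + r₁ + r₂))) :
    volume (closedBall c₁ r₁ ∩ closedBall c₂ r₂) =
      ENNReal.ofReal
        (r₁ ^ 2 * Real.arctan (t / (‖c₁ - c₂‖ ^ 2 + r₁ ^ 2 - r₂ ^ 2)) +
          r₂ ^ 2 * Real.arctan (t / (‖c₁ - c₂‖ ^ 2 - r₁ ^ 2 + r₂ ^ 2)) - t / 2) := by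
  set d := ‖c₁ - c₂‖
  have hd : 0 < d := (abs_nonneg _).trans_lt hlow
  obtain ⟨hlow₁, hlow₂⟩ := abs_lt.mp hlow
  obtain ⟨x₀, hx₀⟩ : ∃ x₀, 2 * d * x₀ = d ^ 2 + r₁ ^ 2 - r₂ ^ 2 :=
    ⟨_, mul_div_cancel₀ _ (by positivity)⟩
  have hx₀_pos : 0 < x₀ := by nlinarith
  have hx₁_pos : 0 < d - x₀ := by nlinarith
  have hx₀_le : x₀ ≤ r₁ := by nlinarith
  have hx₁_le : d - x₀ ≤ r₂ := by nlinarith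
  have hchord : r₂ ^ 2 - (d - x₀) ^ 2 = r₁ ^ 2 - x₀ ^ 2 := by linear_combination hx₀
  -- Heron: `t / 2` is the area of the triangle `c₁ c₂ p` for `p` a common point of the circles
  have heron : (d + r₁ + r₂) * (d + r₁ - r₂) * (d - r₁ + r₂) * (-d + r₁ + r₂) =
      (2 * d) ^ 2 * (r₁ ^ 2 - x₀ ^ 2) := by
    linear_combination (2 * d * x₀ + d ^ 2 + r₁ ^ 2 - r₂ ^ 2) * hx₀
  have ht' : t = 2 * d * √(r₁ ^ 2 - x₀ ^ 2) := by
    rw [ht, heron, sqrt_mul (by positivity), sqrt_sq (by positivity)]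
  have harg₁ : t / (d ^ 2 + r₁ ^ 2 - r₂ ^ 2) = √(r₁ ^ 2 - x₀ ^ 2) / x₀ := by
    rw [ht', ← hx₀]; field_simp
  have harg₂ : t / (d ^ 2 - r₁ ^ 2 + r₂ ^ 2) = √(r₁ ^ 2 - x₀ ^ 2) / (d - x₀) := by
    rw [ht', show d ^ 2 - r₁ ^ 2 + r₂ ^ 2 = 2 * d * (d - x₀) by linear_combination hx₀]
    field_simp
  rw [volume_closedBall_inter_closedBall_eq (v := EuclideanSpace.single 0 d)
      (by rw [PiLp.norm_single, norm_of_nonneg hd.le]),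
    volume_closedBall_zero_inter_closedBall_single hr₁.le hr₂.le,
    volume_planar_lens hr₁ hr₂ hd.le hx₀ (abs_le.mpr ⟨by linarith, hx₀_le⟩)
      (abs_le.mpr ⟨by linarith, hx₁_le⟩),
    arccos_div_eq_arctan hx₀_pos hr₁, arccos_div_eq_arctan hx₁_pos hr₂, hchord, harg₁, harg₂,
    ht']
  congr 1
  ring
end
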